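/- For every σ > 0 and μ ∈ ℝ, the DMIM of the Gaussian density φ(x) = (2πσ²)^{-1/2}·e^{-(x−μ)²/(2σ²)} is given by the convergent series ∫_ℝ φ(x)·e^{-φ(x)} dx = 1 + ∑_{n=1}^∞ ((−1)^n / n!) · (1/√(n+1)) · (2πσ²)^{-n/2}. -/

import Mathlib

/-!
Expanding `e^{-φ}` in its power series gives `φ e^{-φ} = ∑ₖ (-1)ᵏ φᵏ⁺¹ / k!`. Each power of a
Gaussian density is again a multiple of a Gaussian density: `φᵏ⁺¹` is `(2πσ²)^{-k/2} / √(k+1)`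
times the density of `N(μ, σ²/(k+1))`, so `∫ φᵏ⁺¹ = (2πσ²)^{-k/2} / √(k+1)`. These integrals
divided by `k!` are dominated by the exponential series, so the integral and the sum may be
interchanged; the term `k = 0` contributes the leading `1`.
-/

open MeasureTheory Real ProbabilityTheory
open scoped NNReal Nat

theorem hasSum_mul_exp_neg (x : ℝ) :
    HasSum (fun k : ℕ => (-1) ^ k / k ! * x ^ (k + 1)) (x * exp (-x)) := by
  have h : (fun k : ℕ => (-1) ^ k / k ! * x ^ (k + 1)) = fun k => x * ((-x) ^ k / k !) := by
    funext k
    rw [neg_pow]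
    ring
  rw [h, Real.exp_eq_exp_ℝ]
  exact (NormedSpace.expSeries_div_hasSum_exp (-x)).mul_left x

theorem hasSum_integral_mul_exp_neg {α : Type*} [MeasurableSpace α] {μ : Measure α}
    {f : α → ℝ} (hf : ∀ x, 0 ≤ f x) (hint : ∀ k : ℕ, Integrable (fun x => f x ^ (k + 1)) μ)
    (hsum : Summable fun k : ℕ => (∫ x, f x ^ (k + 1) ∂μ) / k !) :
    HasSum (fun k : ℕ => (-1) ^ k / k ! * ∫ x, f x ^ (k + 1) ∂μ) (∫ x, f x * exp (-f x) ∂μ) := by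
  have hnorm (k : ℕ) :
      ∫ x, ‖(-1) ^ k / k ! * f x ^ (k + 1)‖ ∂μ = (∫ x, f x ^ (k + 1) ∂μ) / k ! := by
    simp only [Real.norm_eq_abs, abs_mul, abs_div, abs_pow, abs_neg, abs_one, one_pow,
      Nat.abs_cast, abs_of_nonneg (hf _)]
    rw [integral_const_mul]
    ring
  have := hasSum_integral_of_summable_integral_norm (fun k => (hint k).const_mul ((-1) ^ k / k !))
    (by simpa only [hnorm] using hsum)
  simpa only [integral_const_mul, (hasSum_mul_exp_neg _).tsum_eq] using this

theorem gaussianPDFReal_pow_succ (μ : ℝ) {v : ℝ≥0} (hv : v ≠ 0) (n : ℕ) (x : ℝ) :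
    gaussianPDFReal μ v x ^ (n + 1) =
      (√(2 * π * v))⁻¹ ^ n / √(n + 1) * gaussianPDFReal μ (v / (n + 1)) x := by
  have hv' : (0 : ℝ) < v := by positivity
  have hexp : (n + 1) * (-(x - μ) ^ 2 / (2 * v)) = -(x - μ) ^ 2 / (2 * (v / (n + 1))) := by
    field_simp
  simp only [gaussianPDFReal_def, mul_pow, ← Real.exp_nat_mul, NNReal.coe_div]
  push_cast
  rw [hexp, show 2 * π * (v / (n + 1) : ℝ) = 2 * π * v / (n + 1) by ring,
    sqrt_div (by positivity)]
  have hs : 0 < √(2 * π * v) := by positivity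
  field_simp
  rw [pow_succ]
  field_simp

theorem integrable_gaussianPDFReal_pow_succ (μ : ℝ) {v : ℝ≥0} (hv : v ≠ 0) (n : ℕ) :
    Integrable (fun x => gaussianPDFReal μ v x ^ (n + 1)) := by
  simp_rw [gaussianPDFReal_pow_succ μ hv]
  exact (integrable_gaussianPDFReal _ _).const_mul _

theorem integral_gaussianPDFReal_pow_succ (μ : ℝ) {v : ℝ≥0} (hv : v ≠ 0) (n : ℕ) :
    ∫ x, gaussianPDFReal μ v x ^ (n + 1) = (√(2 * π * v))⁻¹ ^ n / √(n + 1) := by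
  simp_rw [gaussianPDFReal_pow_succ μ hv, integral_const_mul]
  rw [integral_gaussianPDFReal_eq_one μ (by positivity), mul_one]

theorem summable_pow_div_sqrt_succ_div_factorial {c : ℝ} (hc : 0 ≤ c) :
    Summable fun n : ℕ => c ^ n / √(n + 1) / n ! := by
  refine (summable_pow_div_factorial c).of_nonneg_of_le (fun n => by positivity) fun n => ?_
  gcongr
  exact div_le_self (by positivity) (one_le_sqrt.mpr (by simp))

theorem inv_sqrt_pow_eq_rpow {a : ℝ} (ha : 0 ≤ a) (n : ℕ) : (√a)⁻¹ ^ n = a ^ (-(n : ℝ) / 2) := by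
  rw [sqrt_eq_rpow, ← rpow_neg ha, ← rpow_mul_natCast ha]
  ring_nf

/-- DMIM of the Gaussian density: the series
`∑_{n=1}^∞ ((-1)^n/n!) (1/√(n+1)) (2πσ²)^{-n/2}` converges (here reindexed over `n : ℕ`
via `n ↦ n+1`) and `∫ φ(x) e^{-φ(x)} dx = 1 +` its sum. -/
theorem dmim_gaussian_series (σ μ : ℝ) (hσ : 0 < σ) :
    Summable (fun n : ℕ =>
        ((-1 : ℝ) ^ (n + 1) / (n + 1).factorial) * (Real.sqrt ((n : ℝ) + 2))⁻¹ *
          (2 * π * σ ^ 2) ^ (-((n : ℝ) + 1) / 2)) ∧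
      (∫ x : ℝ,
          ((Real.sqrt (2 * π * σ ^ 2))⁻¹ * Real.exp (-(x - μ) ^ 2 / (2 * σ ^ 2))) *
            Real.exp
              (-((Real.sqrt (2 * π * σ ^ 2))⁻¹ * Real.exp (-(x - μ) ^ 2 / (2 * σ ^ 2))))) =
        1 + ∑' n : ℕ,
          ((-1 : ℝ) ^ (n + 1) / (n + 1).factorial) * (Real.sqrt ((n : ℝ) + 2))⁻¹ *
            (2 * π * σ ^ 2) ^ (-((n : ℝ) + 1) / 2) := by
  set v : ℝ≥0 := ⟨σ ^ 2, sq_nonneg σ⟩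
  have hv : v ≠ 0 := NNReal.coe_ne_zero.mp (pow_pos hσ 2).ne'
  have hφ (x : ℝ) :
      (√(2 * π * σ ^ 2))⁻¹ * exp (-(x - μ) ^ 2 / (2 * σ ^ 2)) = gaussianPDFReal μ v x := rfl
  have hterm (n : ℕ) :
      (-1) ^ (n + 1) / (n + 1 : ℕ)! * ((√(2 * π * v))⁻¹ ^ (n + 1) / √(↑(n + 1) + 1)) =
      ((-1 : ℝ) ^ (n + 1) / (n + 1).factorial) * (Real.sqrt ((n : ℝ) + 2))⁻¹ *
          (2 * π * σ ^ 2) ^ (-((n : ℝ) + 1) / 2) := by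
    rw [show (v : ℝ) = σ ^ 2 from rfl, inv_sqrt_pow_eq_rpow (by positivity)]
    push_cast
    ring_nf
  have hseries := hasSum_integral_mul_exp_neg (μ := volume) (gaussianPDFReal_nonneg μ v)
    (integrable_gaussianPDFReal_pow_succ μ hv) (by
      simpa only [integral_gaussianPDFReal_pow_succ μ hv] using
        summable_pow_div_sqrt_succ_div_factorial (c := (√(2 * π * v))⁻¹) (by positivity))
  simp only [integral_gaussianPDFReal_pow_succ μ hv] at hseries
  rw [← hasSum_nat_add_iff' 1] at hseries
  simp only [hterm] at hseries
  simp_rw [hφ]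
  refine ⟨hseries.summable, ?_⟩
  rw [hseries.tsum_eq]
  simp
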